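/- Let E ∈ C³(ℝ²), E_ijk = ∇³E(0)[e_i, e_j, e_k], and define A = [[(E111 − E122)/2, (E112 − E222)/2], [E112, E122]]. Then for every x ∈ ℝ², the 2×2 matrix ∇³E(0)[x] decomposes as ∇³E(0)[x] = c(x) I + Q_{Ax}, where c(x) ∈ ℝ is half the trace of ∇³E(0)[x]. Moreover det A = Δ/2, where Δ = E111 E122 + E112 E222 − E112² − E122². -/

import Mathlib

open Real

noncomputable section

abbrev Vec (N : ℕ) := EuclideanSpace ℝ (Fin N)

/-- canonical basis vectors of `ℝ²`. -/
def e2 (i : Fin 2) : Vec 2 := EuclideanSpace.single i 1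

/-- third partial derivatives `E_ijk = ∇³E(0)[e_i, e_j, e_k]`. -/
def D3 (E : Vec 2 → ℝ) (i j k : Fin 2) : ℝ :=
  iteratedFDeriv ℝ 3 E 0 ![e2 i, e2 j, e2 k]

/-- the contracted matrix `∇³E(0)[x]`, with entries `(∇³E(0)[x])_ij = Σ_k E_ijk x_k`. -/
def Tmat (E : Vec 2 → ℝ) (x : Vec 2) : Matrix (Fin 2) (Fin 2) ℝ :=
  Matrix.of fun i j => ∑ k : Fin 2, D3 E i j k * x k

/-- the matrix `A = [[(E111 - E122)/2, (E112 - E222)/2], [E112, E122]]`. -/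
def Amat (E : Vec 2 → ℝ) : Matrix (Fin 2) (Fin 2) ℝ :=
  !![(D3 E 0 0 0 - D3 E 0 1 1) / 2, (D3 E 0 0 1 - D3 E 1 1 1) / 2;
     D3 E 0 0 1, D3 E 0 1 1]

/-- the symmetric matrix `Q_(a,b) = [[a, b], [b, -a]]`. -/
def Qm (a b : ℝ) : Matrix (Fin 2) (Fin 2) ℝ := !![a, b; b, -a]

end

/-! Since `E` is `C³`, the tensor `E_ijk` is fully symmetric (swapping the first two slots is
symmetry of the second derivative of `DE`, swapping the last two is symmetry of `D²E` at every
point, differentiated). Hence `∇³E(0)[x]` is a symmetric `2 × 2` matrix, and the trace-free part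
of a symmetric matrix `M` is `Q_(a,b)` with `a = (M₀₀ - M₁₁)/2`, `b = M₀₁`; with the symmetries of
`E_ijk` these two numbers are exactly the coordinates of `A x`. -/

section ThirdDerivativeSymmetry

variable {E F : Type*} [NormedAddCommGroup E] [NormedSpace ℝ E] [NormedAddCommGroup F]
  [NormedSpace ℝ F] {f : E → F}

theorem iteratedFDeriv_three_apply_eq_fderiv (x u v w : E) :
    iteratedFDeriv ℝ 3 f x ![u, v, w] = fderiv ℝ (fderiv ℝ (fderiv ℝ f)) x u v w := by
  rw [iteratedFDeriv_succ_apply_right, iteratedFDeriv_two_apply]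
  rfl

theorem ContDiff.fderiv_fderiv_fderiv_swap_left (hf : ContDiff ℝ 3 f) (x u v w : E) :
    fderiv ℝ (fderiv ℝ (fderiv ℝ f)) x u v w = fderiv ℝ (fderiv ℝ (fderiv ℝ f)) x v u w := by
  have hsymm : IsSymmSndFDerivAt ℝ (fderiv ℝ f) x :=
    (hf.fderiv_right (m := 2) (by norm_num)).contDiffAt.isSymmSndFDerivAt (by simp)
  rw [hsymm u v]

theorem ContDiff.fderiv_fderiv_fderiv_swap_right (hf : ContDiff ℝ 3 f) (x u v w : E) :
    fderiv ℝ (fderiv ℝ (fderiv ℝ f)) x u v w = fderiv ℝ (fderiv ℝ (fderiv ℝ f)) x u w v := by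
  have hdiff : Differentiable ℝ (fderiv ℝ (fderiv ℝ f)) :=
    (hf.fderiv_right (m := 2) (by norm_num)).fderiv_right (m := 1) (by norm_num)
      |>.differentiable one_ne_zero
  have hderiv (v w : E) : fderiv ℝ (fun y => fderiv ℝ (fderiv ℝ f) y v w) x u =
      fderiv ℝ (fderiv ℝ (fderiv ℝ f)) x u v w := by
    rw [fderiv_clm_apply ((hdiff x).clm_apply (differentiableAt_const v)) (differentiableAt_const w),
      fderiv_clm_apply (hdiff x) (differentiableAt_const v)]
    simp
  have hsymm : (fun y => fderiv ℝ (fderiv ℝ f) y v w) = fun y => fderiv ℝ (fderiv ℝ f) y w v :=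
    funext fun y => hf.contDiffAt.isSymmSndFDerivAt (by norm_num) v w
  rw [← hderiv, ← hderiv, hsymm]

end ThirdDerivativeSymmetry

theorem Matrix.IsSymm.eq_half_trace_smul_one_add_Qm {M : Matrix (Fin 2) (Fin 2) ℝ} (hM : M.IsSymm) :
    M = (M.trace / 2) • 1 + Qm ((M 0 0 - M 1 1) / 2) (M 0 1) := by
  have h10 : M 1 0 = M 0 1 := hM.apply 0 1
  ext i j
  fin_cases i <;> fin_cases j <;> simp [Qm, Matrix.trace, h10] <;> ring

section D3

variable {E : Vec 2 → ℝ}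

theorem D3_swap_left (hE : ContDiff ℝ 3 E) (i j k : Fin 2) : D3 E i j k = D3 E j i k := by
  simp only [D3, iteratedFDeriv_three_apply_eq_fderiv, hE.fderiv_fderiv_fderiv_swap_left 0 (e2 i)]

theorem D3_swap_right (hE : ContDiff ℝ 3 E) (i j k : Fin 2) : D3 E i j k = D3 E i k j := by
  simp only [D3, iteratedFDeriv_three_apply_eq_fderiv, hE.fderiv_fderiv_fderiv_swap_right 0 (e2 i)]

theorem Tmat_isSymm (hE : ContDiff ℝ 3 E) (x : Vec 2) : (Tmat E x).IsSymm :=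
  Matrix.IsSymm.ext fun i j => by simp only [Tmat, Matrix.of_apply, D3_swap_left hE i j]

theorem Amat_mulVec_zero (hE : ContDiff ℝ 3 E) (x : Vec 2) :
    (Amat E).mulVec (fun i => x i) 0 = (Tmat E x 0 0 - Tmat E x 1 1) / 2 := by
  have h110 : D3 E 1 1 0 = D3 E 0 1 1 := (D3_swap_right hE 1 1 0).trans (D3_swap_left hE 1 0 1)
  simp only [Matrix.mulVec, dotProduct, Amat, Tmat, Matrix.of_apply, Matrix.cons_val',
    Matrix.cons_val_fin_one, Matrix.cons_val_zero, Matrix.cons_val_one, Fin.sum_univ_two, h110]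
  ring

theorem Amat_mulVec_one (hE : ContDiff ℝ 3 E) (x : Vec 2) :
    (Amat E).mulVec (fun i => x i) 1 = Tmat E x 0 1 := by
  simp [Amat, Tmat, Matrix.mulVec, dotProduct, Fin.sum_univ_two, D3_swap_right hE 0 1 0]

theorem Amat_det : (Amat E).det = (D3 E 0 0 0 * D3 E 0 1 1 + D3 E 0 0 1 * D3 E 1 1 1
    - D3 E 0 0 1 ^ 2 - D3 E 0 1 1 ^ 2) / 2 := by
  rw [Amat, Matrix.det_fin_two_of]
  ring

end D3

/-- For `E ∈ C³(ℝ²)`, the matrix `∇³E(0)[x]` decomposes as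
`c(x) I + Q_{Ax}` where `c(x)` is half the trace of `∇³E(0)[x]`, and `det A = Δ/2`. -/
theorem stmt12 (E : Vec 2 → ℝ) (hE : ContDiff ℝ 3 E)
    (Δ : ℝ)
    (hΔ : Δ = D3 E 0 0 0 * D3 E 0 1 1 + D3 E 0 0 1 * D3 E 1 1 1
            - (D3 E 0 0 1) ^ 2 - (D3 E 0 1 1) ^ 2) :
    (∀ x : Vec 2,
      Tmat E x = ((Tmat E x).trace / 2) • (1 : Matrix (Fin 2) (Fin 2) ℝ)
        + Qm ((Amat E).mulVec (fun i => x i) 0) ((Amat E).mulVec (fun i => x i) 1)) ∧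
    (Amat E).det = Δ / 2 := by
  refine ⟨fun x => ?_, hΔ ▸ Amat_det⟩
  rw [Amat_mulVec_zero hE, Amat_mulVec_one hE]
  exact (Tmat_isSymm hE x).eq_half_trace_smul_one_add_Qm
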